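/- For a weighted tree with edge set E and root-avoiding edge cuts S_e, the Arens–Eells norm equals the cut norm: ‖ξ‖_AE = Σ_{e∈E} w_e |Σ_{x∈S_e} ξ(x)| for every zero-sum ξ. -/

import Mathlib

/-- Length of a path (list of vertices) in a weighted graph. -/
noncomputable def pathLen {X : Type*} (w : X → X → ℝ) : List X → ℝ
  | [] => 0
  | [_] => 0
  | a :: b :: l => w a b + pathLen w (b :: l)

/-- `l` is a walk from `x` to `y` along edges of the weighted graph `w`. -/
def IsWalk {X : Type*} (w : X → X → ℝ) (x y : X) (l : List X) : Prop :=
  l.head? = some x ∧ l.getLast? = some y ∧ l.Chain' (fun a b => 0 < w a b)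

/-- The shortest-path distance induced by the weighted graph `w`. -/
noncomputable def gdist {X : Type*} (w : X → X → ℝ) (x y : X) : ℝ :=
  sInf {r | ∃ l, IsWalk w x y l ∧ r = pathLen w l}

/-- A finite rooted weighted tree, encoded by a parent map: every vertex reaches
the root by iterating `parent`, and `wt x` is the weight of the edge `{x, parent x}`. -/
structure WRootedTree (X : Type*) where
  root : X
  parent : X → X
  wt : X → ℝ
  parent_root : parent root = root
  reach : ∀ x, ∃ n, parent^[n] x = root
  wt_pos : ∀ x, x ≠ root → 0 < wt x

/-- The weight function of the graph underlying a rooted tree. -/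
noncomputable def treeW {X : Type*} [DecidableEq X] (T : WRootedTree X) : X → X → ℝ :=
  fun a b =>
    if a ≠ b ∧ T.parent a = b then T.wt a
    else if a ≠ b ∧ T.parent b = a then T.wt b
    else 0

/-- The tree metric: the shortest-path distance of the underlying weighted graph. -/
noncomputable def tdist {X : Type*} [DecidableEq X] (T : WRootedTree X) : X → X → ℝ :=
  gdist (treeW T)

/-- `x ⪯ y` in the tree order: `x` lies on the path from the root to `y`. -/
def treeLE {X : Type*} (T : WRootedTree X) (x y : X) : Prop :=
  ∃ n, T.parent^[n] y = x

/-- Cumulative function `Ξ(x) = ∑_{y ⪰ x} ξ(y)`, the sum of `ξ` over descendants of `x`. -/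
noncomputable def cumul {X : Type*} [Fintype X] (T : WRootedTree X) (ξ : X → ℝ) (x : X) : ℝ :=
  ∑ y, Set.indicator {y | treeLE T x y} ξ y

/-- The Arens–Eells norm of `ξ` for the ground distance `d`: the infimum of
`∑ |a x y| * d x y` over all representations `ξ = ∑ a x y • (δ_x - δ_y)`. -/
noncomputable def aeNorm {X : Type*} [Fintype X] [DecidableEq X]
    (d : X → X → ℝ) (ξ : X → ℝ) : ℝ :=
  sInf {r | ∃ a : X → X → ℝ,
    (∀ z, ξ z = ∑ x, ∑ y, a x y * ((if z = x then 1 else 0) - (if z = y then 1 else 0))) ∧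
    r = ∑ x, ∑ y, |a x y| * d x y}

open Classical in
section
variable {X : Type*}

lemma iterate_root (T : WRootedTree X) : ∀ n, T.parent^[n] T.root = T.root := by
  intro n; induction n with
  | zero => rfl
  | succ n ih => rw [Function.iterate_succ_apply, T.parent_root, ih]

lemma cycle_root (T : WRootedTree X) {z : X} {p : ℕ} (hp : 0 < p)
    (h : T.parent^[p] z = z) : z = T.root := by
  obtain ⟨k, hk⟩ := T.reach z
  have hmul : ∀ q, T.parent^[q * p] z = z := by
    intro q; induction q with
    | zero => simp
    | succ q ih => rw [Nat.succ_mul, Function.iterate_add_apply, h, ih]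
  have hr : T.parent^[k % p] z = T.root := by
    have h2 := hk
    rw [← Nat.mod_add_div k p, Function.iterate_add_apply, Nat.mul_comm, hmul] at h2
    exact h2
  have h3 : T.parent^[(p - k % p) + k % p] z = T.root := by
    rw [Function.iterate_add_apply, hr, iterate_root]
  rw [Nat.sub_add_cancel (le_of_lt (Nat.mod_lt _ hp)), h] at h3
  exact h3

lemma treeLE_refl (T : WRootedTree X) (x : X) : treeLE T x x := ⟨0, rfl⟩

lemma treeLE_antisymm (T : WRootedTree X) {x y : X} (h1 : treeLE T x y) (h2 : treeLE T y x) :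
    x = y := by
  obtain ⟨n, hn⟩ := h1; obtain ⟨m, hm⟩ := h2
  rcases Nat.eq_zero_or_pos (m + n) with h | h
  · rw [Nat.add_eq_zero] at h; rw [← hn, h.2]; rfl
  · have hy : T.parent^[m + n] y = y := by
      rw [Function.iterate_add_apply, hn, hm]
    have hyr := cycle_root T h hy
    rw [← hn, hyr, iterate_root]

lemma parent_ne (T : WRootedTree X) {x : X} (hx : x ≠ T.root) : T.parent x ≠ x := by
  intro h
  exact hx (cycle_root T (p := 1) Nat.one_pos h)

lemma treeLE_step (T : WRootedTree X) {x z : X} (h : treeLE T x (T.parent z)) : treeLE T x z := by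
  obtain ⟨n, hn⟩ := h
  exact ⟨n + 1, by rw [Function.iterate_succ_apply]; exact hn⟩

lemma treeLE_parent (T : WRootedTree X) (x : X) : treeLE T (T.parent x) x := ⟨1, rfl⟩

lemma treeLE_cases (T : WRootedTree X) {x z : X} (h : treeLE T x z) :
    x = z ∨ treeLE T x (T.parent z) := by
  obtain ⟨n, hn⟩ := h
  cases n with
  | zero => exact Or.inl hn.symm
  | succ k => exact Or.inr ⟨k, by rw [Function.iterate_succ_apply] at hn; exact hn⟩

lemma not_treeLE_self_parent (T : WRootedTree X) {z : X} (hz : z ≠ T.root) :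
    ¬ treeLE T z (T.parent z) := by
  rintro ⟨n, hn⟩
  exact hz (cycle_root T (p := n + 1) (Nat.succ_pos n)
    (by rw [Function.iterate_succ_apply]; exact hn))

lemma treeLE_comparable (T : WRootedTree X) {x₁ x₂ y : X} (h1 : treeLE T x₁ y)
    (h2 : treeLE T x₂ y) : treeLE T x₁ x₂ ∨ treeLE T x₂ x₁ := by
  obtain ⟨n, hn⟩ := h1; obtain ⟨m, hm⟩ := h2
  rcases le_total n m with h | h
  · right
    exact ⟨m - n, by rw [← hn, ← Function.iterate_add_apply, Nat.sub_add_cancel h, hm]⟩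
  · left
    exact ⟨n - m, by rw [← hm, ← Function.iterate_add_apply, Nat.sub_add_cancel h, hn]⟩

lemma treeLE_root (T : WRootedTree X) (y : X) : treeLE T T.root y := T.reach y

lemma two_cycle (T : WRootedTree X) {a b : X} (hab : a ≠ b) (h1 : T.parent a = b)
    (h2 : T.parent b = a) : False := by
  have ha : a = T.root := cycle_root T (p := 2) (by norm_num)
    (by rw [show (2:ℕ) = 1 + 1 from rfl, Function.iterate_add_apply]; simp [h1, h2])
  have hb : b = T.root := cycle_root T (p := 2) (by norm_num)
    (by rw [show (2:ℕ) = 1 + 1 from rfl, Function.iterate_add_apply]; simp [h1, h2])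
  exact hab (ha.trans hb.symm)

end
section
variable {X : Type*}

lemma treeW_parent [DecidableEq X] (T : WRootedTree X) {x : X} (hx : x ≠ T.root) :
    treeW T x (T.parent x) = T.wt x := by
  unfold treeW
  rw [if_pos ⟨(parent_ne T hx).symm, rfl⟩]

lemma treeW_pos_cases [DecidableEq X] (T : WRootedTree X) {a b : X} (h : 0 < treeW T a b) :
    (a ≠ b ∧ a ≠ T.root ∧ T.parent a = b) ∨ (a ≠ b ∧ b ≠ T.root ∧ T.parent b = a) := by
  unfold treeW at h
  split_ifs at h with h1 h2
  · refine Or.inl ⟨h1.1, ?_, h1.2⟩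
    intro hr
    exact h1.1 (by rw [hr, ← T.parent_root, ← hr, h1.2])
  · refine Or.inr ⟨h2.1, ?_, h2.2⟩
    intro hr
    exact h2.1 (by rw [hr] at h2 ⊢; rw [← T.parent_root, h2.2])
  · exact absurd h (lt_irrefl 0)

lemma treeW_symm [DecidableEq X] (T : WRootedTree X) (a b : X) : treeW T a b = treeW T b a := by
  rcases eq_or_ne a b with rfl | hab
  · rfl
  unfold treeW
  by_cases h1 : T.parent a = b <;> by_cases h2 : T.parent b = a
  · exact absurd (two_cycle T hab h1 h2) id
  · rw [if_pos ⟨hab, h1⟩, if_neg (fun h : b ≠ a ∧ T.parent b = a => h2 h.2),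
      if_pos ⟨hab.symm, h1⟩]
  · rw [if_neg (fun h : a ≠ b ∧ T.parent a = b => h1 h.2), if_pos ⟨hab, h2⟩,
      if_pos ⟨hab.symm, h2⟩]
  · rw [if_neg (fun h : a ≠ b ∧ T.parent a = b => h1 h.2),
      if_neg (fun h : a ≠ b ∧ T.parent b = a => h2 h.2),
      if_neg (fun h : b ≠ a ∧ T.parent b = a => h2 h.2),
      if_neg (fun h : b ≠ a ∧ T.parent a = b => h1 h.2)]

lemma pathLen_nonneg {w : X → X → ℝ} :
    ∀ l : List X, l.Chain' (fun a b => 0 < w a b) → 0 ≤ pathLen w l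
  | [], _ => le_refl 0
  | [_], _ => le_refl 0
  | a :: b :: l, h => by
      unfold List.Chain' at h
      rw [List.isChain_cons_cons] at h
      have ih := pathLen_nonneg (b :: l) h.2
      simp only [pathLen]
      linarith [h.1]

lemma pathLen_ge {w : X → X → ℝ} {f : X → ℝ}
    (hf : ∀ a b, 0 < w a b → |f a - f b| ≤ w a b) :
    ∀ (l : List X) (x y : X), IsWalk w x y l → |f x - f y| ≤ pathLen w l
  | [], x, y, h => by simp [IsWalk] at h
  | [a], x, y, h => by
      obtain ⟨h1, h2, _⟩ := h
      simp only [List.head?, Option.some.injEq] at h1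
      have h2' : a = y := by simpa using h2
      subst h1; subst h2'
      simp [pathLen]
  | a :: b :: l, x, y, h => by
      obtain ⟨h1, h2, h3⟩ := h
      simp only [List.head?, Option.some.injEq] at h1
      unfold List.Chain' at h3
      rw [List.isChain_cons_cons] at h3
      rw [List.getLast?_cons_cons] at h2
      have ih := pathLen_ge hf (b :: l) b y ⟨rfl, h2, h3.2⟩
      have hab := hf a b h3.1
      simp only [pathLen]
      calc |f x - f y| = |(f a - f b) + (f b - f y)| := by rw [← h1]; ring_nf
        _ ≤ |f a - f b| + |f b - f y| := abs_add_le _ _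
        _ ≤ w a b + pathLen w (b :: l) := add_le_add hab ih

lemma walk_to_root [DecidableEq X] (T : WRootedTree X) (x : X) :
    ∃ l, IsWalk (treeW T) x T.root l := by
  obtain ⟨n, hn⟩ := T.reach x
  induction n generalizing x with
  | zero => exact ⟨[T.root], by rw [show x = T.root from hn]; exact ⟨rfl, rfl, List.isChain_singleton _⟩⟩
  | succ n ih =>
      by_cases hx : x = T.root
      · exact ⟨[T.root], by rw [hx]; exact ⟨rfl, rfl, List.isChain_singleton _⟩⟩
      · rw [Function.iterate_succ_apply] at hn
        obtain ⟨l, hl1, hl2, hl3⟩ := ih (T.parent x) hn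
        obtain ⟨c, t, rfl⟩ : ∃ c t, l = c :: t := by
          cases l with
          | nil => simp at hl1
          | cons c t => exact ⟨c, t, rfl⟩
        simp only [List.head?, Option.some.injEq] at hl1
        refine ⟨x :: c :: t, rfl, ?_, ?_⟩
        · rw [List.getLast?_cons_cons]; exact hl2
        · unfold List.Chain'
          rw [List.isChain_cons_cons]
          refine ⟨?_, hl3⟩
          rw [hl1, treeW_parent T hx]
          exact T.wt_pos x hx

lemma isWalk_reverse {w : X → X → ℝ} (hw : ∀ a b, w a b = w b a) {x y : X} {l : List X}
    (h : IsWalk w x y l) : IsWalk w y x l.reverse := by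
  obtain ⟨h1, h2, h3⟩ := h
  refine ⟨?_, ?_, ?_⟩
  · rw [List.head?_reverse]; exact h2
  · rw [List.getLast?_reverse]; exact h1
  · unfold List.Chain' at h3 ⊢
    rw [List.isChain_reverse]
    exact h3.imp (fun a b hab => show (0:ℝ) < w b a by rw [hw b a]; exact hab)

lemma walk_trans {w : X → X → ℝ} {x y z : X} {l₁ l₂ : List X}
    (h1 : IsWalk w x y l₁) (h2 : IsWalk w y z l₂) : ∃ l, IsWalk w x z l := by
  obtain ⟨h11, h12, h13⟩ := h1
  obtain ⟨h21, h22, h23⟩ := h2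
  obtain ⟨c, t, rfl⟩ : ∃ c t, l₂ = c :: t := by
    cases l₂ with
    | nil => simp at h21
    | cons c t => exact ⟨c, t, rfl⟩
  simp only [List.head?, Option.some.injEq] at h21
  subst h21
  cases t with
  | nil =>
      simp only [List.getLast?] at h22
      simp only [Option.some.injEq] at h22
      exact ⟨l₁, h11, h22 ▸ h12, h13⟩
  | cons c' t' =>
      refine ⟨l₁ ++ c' :: t', ?_, ?_, ?_⟩
      · obtain ⟨d, s, rfl⟩ : ∃ d s, l₁ = d :: s := by
          cases l₁ with
          | nil => simp at h11
          | cons d s => exact ⟨d, s, rfl⟩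
        simpa using h11
      · rw [List.getLast?_append_of_ne_nil l₁ (by simp : (c' :: t') ≠ [])]
        rw [List.getLast?_cons_cons] at h22
        exact h22
      · unfold List.Chain' at h13 h23 ⊢
        rw [List.isChain_append]
        rw [List.isChain_cons_cons] at h23
        refine ⟨h13, h23.2, ?_⟩
        intro p hp q hq
        rw [h12] at hp
        simp only [Option.mem_def, Option.some.injEq] at hp hq
        simp only [List.head?, Option.some.injEq] at hq
        exact hp ▸ hq ▸ h23.1

lemma gdist_nonneg {w : X → X → ℝ} (x y : X) : 0 ≤ gdist w x y := by
  apply Real.sInf_nonneg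
  rintro r ⟨l, hl, rfl⟩
  exact pathLen_nonneg l hl.2.2

lemma tdist_le_wt [DecidableEq X] (T : WRootedTree X) {x : X} (hx : x ≠ T.root) :
    tdist T x (T.parent x) ≤ T.wt x := by
  apply csInf_le
  · exact ⟨0, by rintro r ⟨l, hl, rfl⟩; exact pathLen_nonneg l hl.2.2⟩
  · refine ⟨[x, T.parent x], ⟨rfl, rfl, ?_⟩, ?_⟩
    · unfold List.Chain'
      rw [List.isChain_cons_cons]
      exact ⟨by rw [treeW_parent T hx]; exact T.wt_pos x hx, List.isChain_singleton _⟩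
    · simp [pathLen, treeW_parent T hx]

lemma tdist_ge [Fintype X] [DecidableEq X] (T : WRootedTree X) {f : X → ℝ}
    (hf : ∀ a b, 0 < treeW T a b → |f a - f b| ≤ treeW T a b) (x y : X) :
    |f x - f y| ≤ tdist T x y := by
  apply le_csInf
  · obtain ⟨l₁, hl₁⟩ := walk_to_root T x
    obtain ⟨l₂, hl₂⟩ := walk_to_root T y
    obtain ⟨l, hl⟩ := walk_trans hl₁ (isWalk_reverse (treeW_symm T) hl₂)
    exact ⟨pathLen (treeW T) l, l, hl, rfl⟩
  · rintro r ⟨l, hl, rfl⟩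
    exact pathLen_ge hf l x y hl

end
open scoped Classical in
section
variable {X : Type*}

open scoped Classical

lemma ind_diff (T : WRootedTree X) {z : X} (hz : z ≠ T.root) (x : X) :
    ((if treeLE T x z then (1:ℝ) else 0) - (if treeLE T x (T.parent z) then 1 else 0))
      = if x = z then 1 else 0 := by
  by_cases hxz : x = z
  · subst hxz
    rw [if_pos (treeLE_refl T x), if_neg (not_treeLE_self_parent T hz), if_pos rfl]
    norm_num
  · rw [if_neg hxz]
    by_cases h : treeLE T x (T.parent z)
    · rw [if_pos h, if_pos (treeLE_step T h)]; ring
    · rw [if_neg h, if_neg (fun h' => (treeLE_cases T h').elim hxz h)]; ring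

/-- exactly-one-child decomposition of the descendant indicator -/
lemma ind_split [Fintype X] [DecidableEq X] (T : WRootedTree X) (z y : X) :
    (if treeLE T z y then (1:ℝ) else 0) =
      (if y = z then 1 else 0) +
        ∑ x ∈ Finset.univ.filter (fun x => x ≠ T.root ∧ T.parent x = z),
          (if treeLE T x y then (1:ℝ) else 0) := by
  by_cases hy : treeLE T z y
  · by_cases hyz : y = z
    · subst hyz
      rw [if_pos (treeLE_refl T y), if_pos rfl]
      rw [Finset.sum_eq_zero, add_zero]
      intro x hx
      simp only [Finset.mem_filter] at hx
      rw [if_neg]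
      rintro ⟨n, hn⟩
      refine hx.2.1 (cycle_root T (p := n + 1) (Nat.succ_pos n) ?_)
      rw [Function.iterate_succ_apply, hx.2.2, hn]
    · rw [if_pos hy, if_neg hyz]
      have hP : ∃ n, T.parent^[n] y = z := hy
      set n₀ := Nat.find hP with hn₀def
      have hn₀ : T.parent^[n₀] y = z := Nat.find_spec hP
      have hn₀pos : 0 < n₀ := by
        rcases Nat.eq_zero_or_pos n₀ with h | h
        · exact absurd (by rw [← hn₀, h]; rfl) (Ne.symm hyz)
        · exact h
      set x₀ := T.parent^[n₀ - 1] y with hx₀def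
      have hpx₀ : T.parent x₀ = z := by
        have he : T.parent (T.parent^[n₀ - 1] y) = T.parent^[n₀ - 1 + 1] y :=
          (Function.iterate_succ_apply' T.parent (n₀ - 1) y).symm
        rw [hx₀def, he, Nat.sub_add_cancel hn₀pos, hn₀]
      have hx₀root : x₀ ≠ T.root := by
        intro hr
        have hzr : z = T.root := by rw [← hpx₀, hr, T.parent_root]
        have : T.parent^[n₀ - 1] y = z := by rw [← hx₀def] at *; rw [hr, hzr]
        exact absurd this (Nat.find_min hP (Nat.sub_lt hn₀pos Nat.one_pos))
      have hx₀le : treeLE T x₀ y := ⟨n₀ - 1, rfl⟩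
      have huniq : ∀ x, x ≠ T.root → T.parent x = z → treeLE T x y → x = x₀ := by
        intro x hxr hpx hxy
        have hcomp := treeLE_comparable T hxy hx₀le
        have key : ∀ a b : X, a ≠ T.root → T.parent a = z → T.parent b = z →
            treeLE T a b → a = b := by
          intro a b har hpa hpb ⟨k, hk⟩
          cases k with
          | zero => exact hk.symm
          | succ k =>
              exfalso
              rw [Function.iterate_succ_apply, hpb] at hk
              have h1 : treeLE T a z := ⟨k, hk⟩
              have h2 : treeLE T z a := ⟨1, hpa⟩
              have := treeLE_antisymm T h1 h2
              exact har (cycle_root T (p := 1) Nat.one_pos (by rw [← this] at hpa; exact hpa))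
        rcases hcomp with h | h
        · exact key x x₀ hxr hpx hpx₀ h
        · exact (key x₀ x hx₀root hpx₀ hpx h).symm
      rw [zero_add]
      rw [Finset.sum_eq_single_of_mem x₀
        (by simp only [Finset.mem_filter]; exact ⟨Finset.mem_univ _, hx₀root, hpx₀⟩)]
      · rw [if_pos hx₀le]
      · intro b hb hbne
        simp only [Finset.mem_filter] at hb
        rw [if_neg]
        intro hby
        exact hbne (huniq b hb.2.1 hb.2.2 hby)
  · rw [if_neg hy, if_neg (fun h : y = z => hy (h ▸ treeLE_refl T z))]
    rw [Finset.sum_eq_zero, add_zero]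
    intro x hx
    simp only [Finset.mem_filter] at hx
    rw [if_neg]
    rintro ⟨n, hn⟩
    exact hy ⟨n + 1, by rw [Function.iterate_succ_apply', hn, hx.2.2]⟩

lemma cumul_rec [Fintype X] [DecidableEq X] (T : WRootedTree X) (ξ : X → ℝ) (z : X) :
    (∑ y, if treeLE T z y then ξ y else 0) =
      ξ z + ∑ x ∈ Finset.univ.filter (fun x => x ≠ T.root ∧ T.parent x = z),
        ∑ y, if treeLE T x y then ξ y else 0 := by
  have h : ∀ y, (if treeLE T z y then ξ y else 0) =
      (if y = z then ξ y else 0) +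
        ∑ x ∈ Finset.univ.filter (fun x => x ≠ T.root ∧ T.parent x = z),
          (if treeLE T x y then ξ y else 0) := by
    intro y
    have := congrArg (· * ξ y) (ind_split T z y)
    simp only [sub_mul, add_mul, Finset.sum_mul, ite_mul, one_mul, zero_mul] at this
    exact this
  rw [Finset.sum_congr rfl (fun y _ => h y), Finset.sum_add_distrib]
  rw [Finset.sum_ite_eq' Finset.univ z ξ, if_pos (Finset.mem_univ z)]
  rw [Finset.sum_comm]

lemma cumul_eq [Fintype X] [DecidableEq X] (T : WRootedTree X) (ξ : X → ℝ) (x : X) :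
    cumul T ξ x = ∑ y, if treeLE T x y then ξ y else 0 := by
  unfold cumul
  refine Finset.sum_congr rfl (fun y _ => ?_)
  by_cases h : treeLE T x y
  · rw [if_pos h]; exact Set.indicator_of_mem (show y ∈ {y | treeLE T x y} from h) ξ
  · rw [if_neg h]; exact Set.indicator_of_notMem (show y ∉ {y | treeLE T x y} from h) ξ

lemma cumul_root [Fintype X] [DecidableEq X] (T : WRootedTree X) (ξ : X → ℝ)
    (hξ : ∑ z, ξ z = 0) : (∑ y, if treeLE T T.root y then ξ y else 0) = 0 := by
  rw [← hξ]
  exact Finset.sum_congr rfl (fun y _ => if_pos (treeLE_root T y))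

end
section
variable {X : Type*}
open scoped Classical

noncomputable def auxXi [Fintype X] (T : WRootedTree X) (ξ : X → ℝ) (x : X) : ℝ :=
  ∑ y, if treeLE T x y then ξ y else 0

noncomputable def auxA [Fintype X] [DecidableEq X] (T : WRootedTree X) (ξ : X → ℝ)
    (x y : X) : ℝ :=
  if x ≠ T.root ∧ y = T.parent x then auxXi T ξ x else 0

lemma rep_identity [Fintype X] [DecidableEq X] (T : WRootedTree X) (ξ : X → ℝ)
    (hξ : ∑ z, ξ z = 0) (z : X) :
    ξ z = ∑ x, ∑ y, auxA T ξ x y *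
      ((if z = x then (1:ℝ) else 0) - (if z = y then 1 else 0)) := by
  have h1 : ∀ x y : X, auxA T ξ x y * ((if z = x then (1:ℝ) else 0) - (if z = y then 1 else 0))
      = (if z = x then auxA T ξ x y else 0) - (if z = y then auxA T ξ x y else 0) := by
    intro x y
    rw [mul_sub, mul_ite, mul_one, mul_zero, mul_ite, mul_one, mul_zero]
  simp_rw [h1, Finset.sum_sub_distrib]
  have h2 : (∑ x, ∑ y, if z = x then auxA T ξ x y else 0) = ∑ y, auxA T ξ z y := by
    have e : ∀ x, (∑ y, if z = x then auxA T ξ x y else 0)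
        = if z = x then (∑ y, auxA T ξ x y) else 0 := by
      intro x; split_ifs <;> simp
    rw [Finset.sum_congr rfl fun x _ => e x, Finset.sum_ite_eq Finset.univ z]
    simp
  have h3 : (∑ x, ∑ y, if z = y then auxA T ξ x y else 0) = ∑ x, auxA T ξ x z := by
    refine Finset.sum_congr rfl fun x _ => ?_
    rw [Finset.sum_ite_eq Finset.univ z (fun y => auxA T ξ x y)]
    simp
  rw [h2, h3]
  have h4 : (∑ y, auxA T ξ z y) = if z = T.root then 0 else auxXi T ξ z := by
    by_cases hz : z = T.root
    · rw [if_pos hz]; apply Finset.sum_eq_zero; intro y _; simp [auxA, hz]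
    · rw [if_neg hz]
      have e : ∀ y, auxA T ξ z y = if y = T.parent z then auxXi T ξ z else 0 := by
        intro y; unfold auxA; by_cases h : y = T.parent z <;> simp [h, hz]
      rw [Finset.sum_congr rfl fun y _ => e y,
        Finset.sum_ite_eq' Finset.univ (T.parent z) (fun _ => auxXi T ξ z)]
      simp
  have h5 : (∑ x, auxA T ξ x z)
      = ∑ x ∈ Finset.univ.filter (fun x => x ≠ T.root ∧ T.parent x = z), auxXi T ξ x := by
    rw [Finset.sum_filter]
    refine Finset.sum_congr rfl fun x _ => ?_
    unfold auxA
    by_cases hx : x = T.root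
    · simp [hx]
    · by_cases hp : T.parent x = z
      · simp [hx, hp]
      · rw [if_neg (fun h : (x ≠ T.root ∧ z = T.parent x) => hp h.2.symm),
          if_neg (fun h : (x ≠ T.root ∧ T.parent x = z) => hp h.2)]
  rw [h4, h5]
  have hrec : auxXi T ξ z = ξ z
      + ∑ x ∈ Finset.univ.filter (fun x => x ≠ T.root ∧ T.parent x = z), auxXi T ξ x :=
    cumul_rec T ξ z
  by_cases hz : z = T.root
  · rw [if_pos hz]
    have h0 : auxXi T ξ z = 0 := by
      subst hz; exact cumul_root T ξ hξ
    linarith [hrec]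
  · rw [if_neg hz]
    linarith [hrec]

noncomputable def auxF [Fintype X] [DecidableEq X] (T : WRootedTree X) (ξ : X → ℝ) (z : X) : ℝ :=
  ∑ x ∈ Finset.univ.filter (fun x => x ≠ T.root),
    ((if 0 ≤ auxXi T ξ x then (1:ℝ) else -1) * T.wt x) * (if treeLE T x z then 1 else 0)

lemma auxF_diff [Fintype X] [DecidableEq X] (T : WRootedTree X) (ξ : X → ℝ) {u : X}
    (hu : u ≠ T.root) :
    auxF T ξ u - auxF T ξ (T.parent u)
      = (if 0 ≤ auxXi T ξ u then (1:ℝ) else -1) * T.wt u := by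
  unfold auxF
  rw [← Finset.sum_sub_distrib]
  have e : ∀ x ∈ Finset.univ.filter (fun x => x ≠ T.root),
      ((if 0 ≤ auxXi T ξ x then (1:ℝ) else -1) * T.wt x) * (if treeLE T x u then 1 else 0)
        - ((if 0 ≤ auxXi T ξ x then (1:ℝ) else -1) * T.wt x) * (if treeLE T x (T.parent u) then 1 else 0)
      = if x = u then ((if 0 ≤ auxXi T ξ x then (1:ℝ) else -1) * T.wt x) else 0 := by
    intro x _
    rw [← mul_sub, ind_diff T hu x]
    by_cases h : x = u <;> simp [h]
  rw [Finset.sum_congr rfl e, Finset.sum_ite_eq' (Finset.univ.filter (fun x => x ≠ T.root)) u]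
  rw [if_pos (by simp [hu])]

lemma auxF_edge [Fintype X] [DecidableEq X] (T : WRootedTree X) (ξ : X → ℝ) :
    ∀ a b, 0 < treeW T a b → |auxF T ξ a - auxF T ξ b| ≤ treeW T a b := by
  intro a b hpos
  have habs : ∀ u : X, |(if 0 ≤ auxXi T ξ u then (1:ℝ) else -1) * T.wt u| = |T.wt u| := by
    intro u
    rw [abs_mul]
    split_ifs <;> simp
  rcases treeW_pos_cases T hpos with ⟨hab, har, hpa⟩ | ⟨hab, hbr, hpb⟩
  · rw [← hpa, auxF_diff T ξ har, habs a, abs_of_pos (T.wt_pos a har),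
      treeW_parent T har]
  · rw [abs_sub_comm, ← hpb, auxF_diff T ξ hbr, habs b, abs_of_pos (T.wt_pos b hbr),
      treeW_symm T (T.parent b) b, treeW_parent T hbr]

end

/-- On a weighted tree the Arens–Eells norm equals the cut norm associated with the
edge cuts $S_e$ (the component of $T \setminus e$ avoiding the root, i.e. the set of
descendants of the lower endpoint) weighted by the edge weights. -/
theorem aeNorm_tree_eq_cutNorm {X : Type*} [Fintype X] [DecidableEq X] (T : WRootedTree X)
    (ξ : X → ℝ) (hξ : ∑ z, ξ z = 0) :
    aeNorm (tdist T) ξ =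
      ∑ x ∈ Finset.univ.filter (fun x => x ≠ T.root),
        T.wt x * |∑ y, Set.indicator {y | treeLE T x y} ξ y| := by
  classical
  have hcut : ∀ x : X, (∑ y, Set.indicator {y | treeLE T x y} ξ y) = auxXi T ξ x :=
    fun x => cumul_eq T ξ x
  simp only [hcut]
  have hmem : (∑ x, ∑ y, |auxA T ξ x y| * tdist T x y) ∈
      {r : ℝ | ∃ a : X → X → ℝ,
        (∀ z, ξ z = ∑ x, ∑ y, a x y * ((if z = x then (1:ℝ) else 0) - (if z = y then 1 else 0))) ∧
        r = ∑ x, ∑ y, |a x y| * tdist T x y} :=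
    ⟨auxA T ξ, rep_identity T ξ hξ, rfl⟩
  have hbdd : BddBelow {r : ℝ | ∃ a : X → X → ℝ,
      (∀ z, ξ z = ∑ x, ∑ y, a x y * ((if z = x then (1:ℝ) else 0) - (if z = y then 1 else 0))) ∧
      r = ∑ x, ∑ y, |a x y| * tdist T x y} := by
    refine ⟨0, ?_⟩
    rintro r ⟨a, _, rfl⟩
    apply Finset.sum_nonneg; intro x _
    apply Finset.sum_nonneg; intro y _
    exact mul_nonneg (abs_nonneg _) (gdist_nonneg x y)
  unfold aeNorm
  apply le_antisymm
  · refine le_trans (csInf_le hbdd hmem) ?_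
    have hinner : ∀ x : X, (∑ y, |auxA T ξ x y| * tdist T x y)
        = if x ≠ T.root then |auxXi T ξ x| * tdist T x (T.parent x) else 0 := by
      intro x
      by_cases hx : x = T.root
      · rw [if_neg (not_not_intro hx)]
        apply Finset.sum_eq_zero; intro y _; simp [auxA, hx]
      · rw [if_pos hx]
        have e : ∀ y, |auxA T ξ x y| * tdist T x y
            = if y = T.parent x then |auxXi T ξ x| * tdist T x y else 0 := by
          intro y; unfold auxA; by_cases h : y = T.parent x <;> simp [h, hx]
        rw [Finset.sum_congr rfl fun y _ => e y,
          Finset.sum_ite_eq' Finset.univ (T.parent x) (fun y => |auxXi T ξ x| * tdist T x y)]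
        simp
    rw [Finset.sum_congr rfl fun x _ => hinner x, ← Finset.sum_filter]
    apply Finset.sum_le_sum
    intro x hx
    simp only [Finset.mem_filter] at hx
    rw [mul_comm (T.wt x)]
    exact mul_le_mul_of_nonneg_left (tdist_le_wt T hx.2) (abs_nonneg _)
  · apply le_csInf ⟨_, hmem⟩
    rintro r ⟨a, ha, rfl⟩
    have hdist : ∀ u v : X, |auxF T ξ u - auxF T ξ v| ≤ tdist T u v :=
      tdist_ge T (auxF_edge T ξ)
    have hA : ∑ z, ξ z * auxF T ξ z
        = ∑ x ∈ Finset.univ.filter (fun x => x ≠ T.root), T.wt x * |auxXi T ξ x| := by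
      unfold auxF
      simp_rw [Finset.mul_sum]
      rw [Finset.sum_comm]
      refine Finset.sum_congr rfl fun x _ => ?_
      have e1 : ∀ z, ξ z * (((if 0 ≤ auxXi T ξ x then (1:ℝ) else -1) * T.wt x)
            * (if treeLE T x z then (1:ℝ) else 0))
          = ((if 0 ≤ auxXi T ξ x then (1:ℝ) else -1) * T.wt x)
            * (if treeLE T x z then ξ z else 0) := by
        intro z; by_cases h : treeLE T x z
        · rw [if_pos h, if_pos h]; ring
        · rw [if_neg h, if_neg h]; ring
      rw [Finset.sum_congr rfl fun z _ => e1 z, ← Finset.mul_sum]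
      have e2 : (∑ z, if treeLE T x z then ξ z else 0) = auxXi T ξ x := rfl
      rw [e2]
      by_cases h : 0 ≤ auxXi T ξ x
      · rw [if_pos h, abs_of_nonneg h]; ring
      · rw [if_neg h, abs_of_neg (lt_of_not_ge h)]; ring
    have key : ∀ x y : X,
        (∑ z, (a x y * ((if z = x then (1:ℝ) else 0) - (if z = y then 1 else 0))) * auxF T ξ z)
          = a x y * (auxF T ξ x - auxF T ξ y) := by
      intro x y
      have e : ∀ z, (a x y * ((if z = x then (1:ℝ) else 0) - (if z = y then 1 else 0))) * auxF T ξ z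
          = a x y * ((if z = x then auxF T ξ z else 0) - (if z = y then auxF T ξ z else 0)) := by
        intro z
        rw [mul_assoc, sub_mul, ite_mul, ite_mul, one_mul, zero_mul]
      rw [Finset.sum_congr rfl fun z _ => e z, ← Finset.mul_sum, Finset.sum_sub_distrib,
        Finset.sum_ite_eq' Finset.univ x (auxF T ξ), Finset.sum_ite_eq' Finset.univ y (auxF T ξ)]
      simp
    have hB : ∑ z, ξ z * auxF T ξ z = ∑ x, ∑ y, a x y * (auxF T ξ x - auxF T ξ y) := by
      calc ∑ z, ξ z * auxF T ξ z
          = ∑ z, (∑ x, ∑ y, a x y * ((if z = x then (1:ℝ) else 0) - (if z = y then 1 else 0)))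
              * auxF T ξ z := Finset.sum_congr rfl fun z _ => by rw [← ha z]
        _ = ∑ z, ∑ x, ∑ y,
              (a x y * ((if z = x then (1:ℝ) else 0) - (if z = y then 1 else 0))) * auxF T ξ z := by
            refine Finset.sum_congr rfl fun z _ => ?_
            rw [Finset.sum_mul]
            exact Finset.sum_congr rfl fun x _ => by rw [Finset.sum_mul]
        _ = ∑ x, ∑ z, ∑ y,
              (a x y * ((if z = x then (1:ℝ) else 0) - (if z = y then 1 else 0))) * auxF T ξ z :=
            Finset.sum_comm
        _ = ∑ x, ∑ y, ∑ z,
              (a x y * ((if z = x then (1:ℝ) else 0) - (if z = y then 1 else 0))) * auxF T ξ z :=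
            Finset.sum_congr rfl fun x _ => Finset.sum_comm
        _ = ∑ x, ∑ y, a x y * (auxF T ξ x - auxF T ξ y) :=
            Finset.sum_congr rfl fun x _ => Finset.sum_congr rfl fun y _ => key x y
    rw [← hA, hB]
    apply Finset.sum_le_sum; intro x _
    apply Finset.sum_le_sum; intro y _
    calc a x y * (auxF T ξ x - auxF T ξ y) ≤ |a x y * (auxF T ξ x - auxF T ξ y)| := le_abs_self _
      _ = |a x y| * |auxF T ξ x - auxF T ξ y| := abs_mul _ _
      _ ≤ |a x y| * tdist T x y := mul_le_mul_of_nonneg_left (hdist x y) (abs_nonneg _)
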